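/- arXiv:2005.07370 — 8 statements merged into one kernel-verified Lean document; each statement's English description precedes it below -/
import Mathlib

section
/- Let n ≥ 1 be an integer, let x_1, …, x_n be strictly positive real numbers, and let p < 0 be a real number with p ≤ −n·log₂(n). Then min_{1≤i≤n} x_i ≤ ((1/n)·∑_{i=1}^n x_i^p)^{1/p} ≤ 2^{1/n} · min_{1≤i≤n} x_i. -/
/-- For positive reals `x_1, …, x_n` and `p < 0` with `p ≤ -n·log₂ n`, the `p`-th
generalized mean `((1/n)·∑ x_i^p)^(1/p)` lies between `min_i x_i` and `2^(1/n) · min_i x_i`. -/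
theorem stmt_0 (n : ℕ) (hn : 1 ≤ n) (x : Fin n → ℝ) (hx : ∀ i, 0 < x i)
    (p : ℝ) (hp : p < 0) (hpn : p ≤ -((n : ℝ) * Real.logb 2 n)) :
    Finset.univ.inf' (Finset.univ_nonempty_iff.mpr ⟨⟨0, hn⟩⟩) x ≤
      ((1 / (n : ℝ)) * ∑ i, (x i) ^ p) ^ (1 / p) ∧
    ((1 / (n : ℝ)) * ∑ i, (x i) ^ p) ^ (1 / p) ≤
      (2 : ℝ) ^ ((1 : ℝ) / n) * Finset.univ.inf' (Finset.univ_nonempty_iff.mpr ⟨⟨0, hn⟩⟩) x := by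
  have hp' : p ≠ 0 := ne_of_lt hp
  have hn0 : (0:ℝ) < n := by exact_mod_cast hn
  obtain ⟨i0, -, hi0⟩ := Finset.exists_mem_eq_inf' (Finset.univ_nonempty_iff.mpr ⟨⟨0, hn⟩⟩) x
  set m := Finset.univ.inf' (Finset.univ_nonempty_iff.mpr ⟨⟨0, hn⟩⟩) x with hmdef
  have hm_le : ∀ i, m ≤ x i := fun i => Finset.inf'_le x (Finset.mem_univ i)
  have hm_pos : 0 < m := hi0 ▸ hx i0
  have hterm : ∀ i, x i ^ p ≤ m ^ p := fun i =>
    Real.rpow_le_rpow_of_nonpos hm_pos (hm_le i) hp.le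
  have hsum_ub : ∑ i, x i ^ p ≤ n * m ^ p := by
    calc ∑ i, x i ^ p ≤ ∑ _i : Fin n, m ^ p := Finset.sum_le_sum (fun i _ => hterm i)
    _ = n * m ^ p := by simp [Finset.sum_const, mul_comm]
  have hsum_lb : m ^ p ≤ ∑ i, x i ^ p := by
    have h := Finset.single_le_sum (f := fun i => x i ^ p)
      (fun i _ => (Real.rpow_pos_of_pos (hx i) p).le) (Finset.mem_univ i0)
    rw [hi0]; simpa using h
  have hsum_pos : 0 < ∑ i, x i ^ p := lt_of_lt_of_le (Real.rpow_pos_of_pos hm_pos p) hsum_lb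
  have hA_pos : 0 < (1 / (n:ℝ)) * ∑ i, x i ^ p := by positivity
  have h1p : 1 / p < 0 := div_neg_of_pos_of_neg one_pos hp
  have hmm : (m ^ p) ^ (1/p) = m := by
    rw [← Real.rpow_mul hm_pos.le, mul_one_div, div_self hp', Real.rpow_one]
  constructor
  · -- lower bound
    have h1 : (1 / (n:ℝ)) * ∑ i, x i ^ p ≤ m ^ p := by
      rw [one_div, inv_mul_le_iff₀ hn0]
      exact hsum_ub
    have := Real.rpow_le_rpow_of_nonpos hA_pos h1 h1p.le
    rwa [hmm] at this
  · -- upper bound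
    have hB_pos : 0 < (1 / (n:ℝ)) * m ^ p := by positivity
    have h2 : (1 / (n:ℝ)) * m ^ p ≤ (1 / (n:ℝ)) * ∑ i, x i ^ p :=
      mul_le_mul_of_nonneg_left hsum_lb (by positivity)
    have h3 := Real.rpow_le_rpow_of_nonpos hB_pos h2 h1p.le
    have h4 : ((1 / (n:ℝ)) * m ^ p) ^ (1/p) = ((n:ℝ)) ^ (-(1/p)) * m := by
      rw [Real.mul_rpow (by positivity) (by positivity), hmm, one_div (n:ℝ),
        ← Real.rpow_neg_one (n:ℝ), ← Real.rpow_mul hn0.le]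
      norm_num
    have h5 : ((n:ℝ)) ^ (-(1/p)) ≤ (2:ℝ) ^ ((1:ℝ)/n) := by
      rcases eq_or_lt_of_le hn with h1n | h1n
      · -- n = 1
        have : (n:ℝ) = 1 := by exact_mod_cast h1n.symm
        rw [this, Real.one_rpow, div_one, Real.rpow_one]
        norm_num
      · -- 2 ≤ n
        have hL : 0 < Real.logb 2 n := Real.logb_pos (by norm_num) (by exact_mod_cast h1n)
        have hnL : 0 < (n:ℝ) * Real.logb 2 n := by positivity
        have hnegp : (n:ℝ) * Real.logb 2 n ≤ -p := by linarith
        have hexp : -(1/p) ≤ 1 / ((n:ℝ) * Real.logb 2 n) := by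
          have := one_div_le_one_div_of_le hnL hnegp
          rwa [one_div_neg_eq_neg_one_div] at this
        have h2L : (2:ℝ) ^ Real.logb 2 (n:ℝ) = (n:ℝ) :=
          Real.rpow_logb (by norm_num) (by norm_num) hn0
        calc (n:ℝ) ^ (-(1/p)) = ((2:ℝ) ^ Real.logb 2 (n:ℝ)) ^ (-(1/p)) := by rw [h2L]
        _ = (2:ℝ) ^ (Real.logb 2 (n:ℝ) * (-(1/p))) := by
            rw [← Real.rpow_mul (by norm_num)]
        _ ≤ (2:ℝ) ^ ((1:ℝ)/n) := by
            apply Real.rpow_le_rpow_of_exponent_le one_le_two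
            have := mul_le_mul_of_nonneg_left hexp hL.le
            calc Real.logb 2 (n:ℝ) * (-(1/p))
                ≤ Real.logb 2 (n:ℝ) * (1 / ((n:ℝ) * Real.logb 2 (n:ℝ))) := this
            _ = (1:ℝ)/n := by field_simp
    calc ((1 / (n:ℝ)) * ∑ i, x i ^ p) ^ (1/p) ≤ ((1 / (n:ℝ)) * m ^ p) ^ (1/p) := h3
    _ = ((n:ℝ)) ^ (-(1/p)) * m := h4
    _ ≤ (2:ℝ) ^ ((1:ℝ)/n) * m := mul_le_mul_of_nonneg_right h5 hm_pos.le
end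

section
/- Let v be a valuation on [m], let n ≥ 1 be an integer, and let A ⊆ [m] be nonempty. Then (max_{g ∈ A} v({g})) + ℓ(v) ≥ v(A)/(4n), where ℓ(v) := min_{S ⊆ [m], |S| ≤ 2n} (1/(2n))·v([m] \ S). -/
/-- `ℓ(v) := min_{S ⊆ [m], |S| ≤ 2n} (1/(2n))·v([m] \ S)`. -/
noncomputable def ell (m n : ℕ) (v : Finset (Fin m) → ℝ) : ℝ :=
  ((Finset.univ : Finset (Fin m)).powerset.filter (fun S => S.card ≤ 2 * n)).inf'
    ⟨∅, by simp⟩ (fun S => (1 / (2 * (n : ℝ))) * v (Finset.univ \ S))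

lemma sub_sum {m : ℕ} (v : Finset (Fin m) → ℝ) (hnorm : v ∅ = 0)
    (hsub : ∀ A B : Finset (Fin m), v (A ∪ B) ≤ v A + v B) :
    ∀ T : Finset (Fin m), v T ≤ ∑ g ∈ T, v {g} := by
  intro T
  induction T using Finset.induction with
  | empty => simp [hnorm]
  | @insert a s h ih =>
    rw [Finset.sum_insert h, Finset.insert_eq]
    exact le_trans (hsub _ _) (by linarith)

/-- For a valuation `v` on `[m]`, `n ≥ 1` and a nonempty `A ⊆ [m]`:
`(max_{g ∈ A} v({g})) + ℓ(v) ≥ v(A)/(4n)`. -/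
theorem stmt_1 (m n : ℕ) (hn : 1 ≤ n) (v : Finset (Fin m) → ℝ)
    (hnonneg : ∀ S : Finset (Fin m), 0 ≤ v S)
    (hnorm : v ∅ = 0)
    (hmono : ∀ A B : Finset (Fin m), A ⊆ B → v A ≤ v B)
    (hsub : ∀ A B : Finset (Fin m), v (A ∪ B) ≤ v A + v B)
    (A : Finset (Fin m)) (hA : A.Nonempty) :
    A.sup' hA (fun g => v {g}) + ell m n v ≥ v A / (4 * (n : ℝ)) := by
  set M := A.sup' hA (fun g => v {g}) with hM
  obtain ⟨a, ha⟩ := hA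
  have hM0 : 0 ≤ M := le_trans (hnonneg {a}) (Finset.le_sup' (fun g => v {g}) ha)
  have hc : (1 : ℝ) ≤ (n : ℝ) := by exact_mod_cast hn
  have hc0 : (0 : ℝ) < (n : ℝ) := by linarith
  rw [ge_iff_le, ← sub_le_iff_le_add']
  unfold ell
  apply Finset.le_inf'
  intro S hS
  simp only [Finset.mem_filter, Finset.mem_powerset] at hS
  obtain ⟨-, hScard⟩ := hS
  -- key: v A ≤ 2n * M + v (univ \ S)
  have h1 : v A ≤ v (A ∩ S) + v (A \ S) := by
    have : A = (A ∩ S) ∪ (A \ S) := by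
      ext x; simp [Finset.mem_inter, Finset.mem_sdiff]; tauto
    calc v A = v ((A ∩ S) ∪ (A \ S)) := by rw [← this]
      _ ≤ _ := hsub _ _
  have h2 : v (A ∩ S) ≤ (2 * n : ℕ) * M := by
    calc v (A ∩ S) ≤ ∑ g ∈ A ∩ S, v {g} := sub_sum v hnorm hsub _
      _ ≤ (A ∩ S).card • M := by
          apply Finset.sum_le_card_nsmul
          intro g hg
          exact Finset.le_sup' (fun g => v {g}) (Finset.mem_of_mem_inter_left hg)
      _ ≤ (2 * n : ℕ) • M := by
          apply nsmul_le_nsmul_left hM0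
          exact le_trans (Finset.card_le_card (Finset.inter_subset_right)) hScard
      _ = (2 * n : ℕ) * M := nsmul_eq_mul _ _
  have h3 : v (A \ S) ≤ v (Finset.univ \ S) :=
    hmono _ _ (Finset.sdiff_subset_sdiff (Finset.subset_univ A) (le_refl S))
  have hw : 0 ≤ v (Finset.univ \ S) := hnonneg _
  have hkey : v A ≤ 2 * (n : ℝ) * M + v (Finset.univ \ S) := by
    push_cast at h2
    linarith
  rw [sub_le_iff_le_add', div_le_iff₀ (by positivity)]
  have h4 : (1 / (2 * (n : ℝ)) * v (Finset.univ \ S)) * (2 * (n : ℝ)) = v (Finset.univ \ S) := by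
    field_simp
  nlinarith [mul_nonneg hM0 hc0.le]
end

section
/- Let G be a finite set of goods, let k ≤ n be positive integers, and let v_1, …, v_k be valuations on G (nonnegative, normalized, monotone, subadditive). Suppose that v_i({g}) < (1/(2n))·v_i(G) for every agent i ∈ {1,…,k} and every good g ∈ G. Then there exists a partition (P_1, …, P_k) of G into k pairwise disjoint parts whose union is G such that v_i(P_i) ≥ (1/(2n))·v_i(G) for every i. -/
open Finset

lemma aux_part {G : Type*} [Fintype G] [DecidableEq G] :
    ∀ (k : ℕ) (v : Fin (k+1) → Finset G → ℝ) (t : Fin (k+1) → ℝ) (R : Finset G),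
    (∀ i (S : Finset G), 0 ≤ v i S) → (∀ i, v i ∅ = 0) →
    (∀ i (A B : Finset G), v i (A ∪ B) ≤ v i A + v i B) →
    (∀ i, 0 ≤ t i) → (∀ i (g : G), v i {g} < t i) →
    (∀ i, (2*(k:ℝ)+1) * t i ≤ v i R) →
    ∃ P : Fin (k+1) → Finset G, (∀ i j, i ≠ j → Disjoint (P i) (P j)) ∧
      Finset.univ.biUnion P = R ∧ ∀ i, t i ≤ v i (P i) := by
  intro k
  induction k with
  | zero =>
    intro v t R _ _ _ ht _ hbig
    refine ⟨fun _ => R, ?_, ?_, ?_⟩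
    · intro i j hij; exact absurd (Fin.fin_one_eq_zero i ▸ Fin.fin_one_eq_zero j ▸ rfl) hij
    · ext x; simp
    · intro i
      have h1 := hbig i
      have h2 := ht i
      push_cast at h1
      linarith
  | succ k IH =>
    intro v t R hnn hno hsub ht hsmall hbig
    classical
    have hne : (R.powerset.filter (fun S => ∃ i, t i ≤ v i S)).Nonempty := by
      refine ⟨R, ?_⟩
      simp only [mem_filter, mem_powerset]
      refine ⟨subset_rfl, ⟨0, ?_⟩⟩
      have h1 := hbig 0
      have h2 := ht 0
      push_cast at h1
      nlinarith
    obtain ⟨S, hS, hmin⟩ := Finset.exists_min_image _ Finset.card hne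
    simp only [mem_filter, mem_powerset] at hS
    obtain ⟨hSR, i₀, hi₀⟩ := hS
    have hS2 : ∀ j, v j S ≤ 2 * t j := by
      intro j
      rcases S.eq_empty_or_nonempty with hSe | ⟨g, hg⟩
      · rw [hSe, hno j]; linarith [ht j]
      · have herase : ∀ j', v j' (S.erase g) < t j' := by
          by_contra hcon
          push_neg at hcon
          obtain ⟨j', hj'⟩ := hcon
          have hmem : S.erase g ∈ R.powerset.filter (fun S => ∃ i, t i ≤ v i S) := by
            simp only [mem_filter, mem_powerset]
            exact ⟨(Finset.erase_subset g S).trans hSR, ⟨j', hj'⟩⟩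
          have h1 := hmin _ hmem
          have h2 := Finset.card_erase_lt_of_mem hg
          omega
        have hle : v j S ≤ v j {g} + v j (S.erase g) := by
          have hins : ({g} : Finset G) ∪ S.erase g = S := by
            rw [← Finset.insert_eq, Finset.insert_erase hg]
          calc v j S = v j (({g} : Finset G) ∪ S.erase g) := by rw [hins]
            _ ≤ v j {g} + v j (S.erase g) := hsub j _ _
        linarith [hsmall j g, herase j]
    have hrest : ∀ j, (2*(k:ℝ)+1) * t j ≤ v j (R \ S) := by
      intro j
      have hcup : S ∪ (R \ S) = R := Finset.union_sdiff_of_subset hSR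
      have h1 := hsub j S (R \ S)
      rw [hcup] at h1
      have h2 := hbig j
      have h3 := hS2 j
      push_cast at h2 ⊢
      linarith
    obtain ⟨P', hdisj', hun', hval'⟩ :=
      IH (fun m => v (i₀.succAbove m)) (fun m => t (i₀.succAbove m)) (R \ S)
        (fun m S => hnn _ S) (fun m => hno _) (fun m A B => hsub _ A B) (fun m => ht _)
        (fun m g => hsmall _ g) (fun m => hrest _)
    have hsubP : ∀ m, P' m ⊆ R \ S := by
      intro m
      rw [← hun']
      exact Finset.subset_biUnion_of_mem P' (mem_univ m)
    refine ⟨i₀.insertNth S P', ?_, ?_, ?_⟩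
    · intro a b hab
      by_cases ha : a = i₀
      · subst ha
        have hb : b ≠ a := Ne.symm hab
        obtain ⟨m, rfl⟩ := Fin.exists_succAbove_eq hb
        rw [Fin.insertNth_apply_same, Fin.insertNth_apply_succAbove]
        exact Finset.disjoint_sdiff.mono_right (hsubP m)
      · obtain ⟨m, rfl⟩ := Fin.exists_succAbove_eq (show a ≠ i₀ from ha)
        by_cases hbb : b = i₀
        · subst hbb
          rw [Fin.insertNth_apply_same, Fin.insertNth_apply_succAbove]
          exact (Finset.disjoint_sdiff.mono_right (hsubP m)).symm
        · obtain ⟨m', rfl⟩ := Fin.exists_succAbove_eq (show b ≠ i₀ from hbb)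
          rw [Fin.insertNth_apply_succAbove, Fin.insertNth_apply_succAbove]
          exact hdisj' m m' (fun h => hab (by rw [h]))
    · apply Finset.Subset.antisymm
      · intro x hx
        rw [Finset.mem_biUnion] at hx
        obtain ⟨i, _, hxi⟩ := hx
        by_cases hi : i = i₀
        · subst hi
          rw [Fin.insertNth_apply_same] at hxi
          exact hSR hxi
        · obtain ⟨m, rfl⟩ := Fin.exists_succAbove_eq (show i ≠ i₀ from hi)
          rw [Fin.insertNth_apply_succAbove] at hxi
          exact (Finset.sdiff_subset) (hsubP m hxi)
      · intro x hx
        rw [Finset.mem_biUnion]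
        by_cases hxS : x ∈ S
        · refine ⟨i₀, mem_univ _, ?_⟩
          rw [Fin.insertNth_apply_same]
          exact hxS
        · have : x ∈ R \ S := Finset.mem_sdiff.mpr ⟨hx, hxS⟩
          rw [← hun', Finset.mem_biUnion] at this
          obtain ⟨m, _, hm⟩ := this
          refine ⟨i₀.succAbove m, mem_univ _, ?_⟩
          rw [Fin.insertNth_apply_succAbove]
          exact hm
    · intro i
      by_cases hi : i = i₀
      · subst hi
        rw [Fin.insertNth_apply_same]
        exact hi₀
      · obtain ⟨m, rfl⟩ := Fin.exists_succAbove_eq (show i ≠ i₀ from hi)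
        rw [Fin.insertNth_apply_succAbove]
        exact hval' m

/-- Moving-knife guarantee: if `k ≤ n` agents have valuations on a finite set `G` of goods
and every single good has value `< (1/(2n))·v_i(G)` for every agent `i`, then `G` can be
partitioned into `k` parts `P_1, …, P_k` with `v_i(P_i) ≥ (1/(2n))·v_i(G)` for all `i`. -/
theorem stmt_3 {G : Type*} [Fintype G] [DecidableEq G]
    (k n : ℕ) (hk : 1 ≤ k) (hkn : k ≤ n)
    (v : Fin k → Finset G → ℝ)
    (hnonneg : ∀ i (S : Finset G), 0 ≤ v i S)
    (hnorm : ∀ i, v i ∅ = 0)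
    (hmono : ∀ i (A B : Finset G), A ⊆ B → v i A ≤ v i B)
    (hsub : ∀ i (A B : Finset G), v i (A ∪ B) ≤ v i A + v i B)
    (hsmall : ∀ i (g : G), v i {g} < (1 / (2 * (n : ℝ))) * v i Finset.univ) :
    ∃ P : Fin k → Finset G,
      (∀ i j, i ≠ j → Disjoint (P i) (P j)) ∧
      (Finset.univ.biUnion P = Finset.univ) ∧
      (∀ i, v i (P i) ≥ (1 / (2 * (n : ℝ))) * v i Finset.univ) := by
  obtain ⟨k', rfl⟩ : ∃ k', k = k' + 1 := ⟨k - 1, (Nat.succ_pred_eq_of_pos hk).symm⟩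
  have hn1 : 1 ≤ n := le_trans hk hkn
  have hn : (0:ℝ) < 2 * n := by
    have : (1:ℝ) ≤ n := by exact_mod_cast hn1
    linarith
  set t : Fin (k' + 1) → ℝ := fun i => (1 / (2 * (n : ℝ))) * v i Finset.univ with ht_def
  have ht : ∀ i, 0 ≤ t i := by
    intro i
    apply mul_nonneg _ (hnonneg i _)
    positivity
  have hbig : ∀ i, (2*(k':ℝ)+1) * t i ≤ v i Finset.univ := by
    intro i
    have hc : (2*(k':ℝ)+1) ≤ 2 * n := by
      have : (k':ℝ) + 1 ≤ n := by exact_mod_cast hkn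
      linarith
    have h0 : 0 ≤ t i := ht i
    have h1 : (2*(k':ℝ)+1) * t i ≤ (2 * n) * t i := mul_le_mul_of_nonneg_right hc h0
    have h2 : (2 * (n:ℝ)) * t i = v i Finset.univ := by
      rw [ht_def]
      field_simp
    linarith
  obtain ⟨P, hdisj, hun, hval⟩ :=
    aux_part k' v t Finset.univ hnonneg hnorm hsub ht (fun i g => hsmall i g)
      (fun i => hbig i)
  exact ⟨P, hdisj, hun, fun i => hval i⟩
end

section
/- Let v_1, …, v_n be valuations on [m] and let G ⊆ [m] be a subset with |[m] \ G| ≤ n. Then there exists a partition (B_1, …, B_n) of G into n pairwise disjoint parts whose union is G such that v_i(B_i) ≥ ℓ(v_i) for every agent i ∈ {1,…,n}, where ℓ(v_i) := min_{S ⊆ [m], |S| ≤ 2n} (1/(2n))·v_i([m] \ S). -/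
lemma ell_le_aux (m n : ℕ) (hn : 1 ≤ n) (v : Finset (Fin m) → ℝ)
    (S : Finset (Fin m)) (hS : S.card ≤ 2 * n) :
    2 * (n : ℝ) * ell m n v ≤ v (Finset.univ \ S) := by
  have hn' : (1 : ℝ) ≤ n := by exact_mod_cast hn
  have hpos : (0 : ℝ) < 2 * n := by linarith
  have h1 : ell m n v ≤ (1 / (2 * (n : ℝ))) * v (Finset.univ \ S) := by
    apply Finset.inf'_le
    simp [hS]
  have h2 := mul_le_mul_of_nonneg_left h1 hpos.le
  calc 2 * (n : ℝ) * ell m n v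
      ≤ 2 * (n : ℝ) * ((1 / (2 * (n : ℝ))) * v (Finset.univ \ S)) := h2
    _ = v (Finset.univ \ S) := by field_simp

lemma key (m n : ℕ) (hn : 1 ≤ n) (v : Fin n → Finset (Fin m) → ℝ)
    (hnonneg : ∀ i (S : Finset (Fin m)), 0 ≤ v i S)
    (hnorm : ∀ i, v i ∅ = 0)
    (hmono : ∀ i (A B : Finset (Fin m)), A ⊆ B → v i A ≤ v i B)
    (hsub : ∀ i (A B : Finset (Fin m)), v i (A ∪ B) ≤ v i A + v i B)
    (G : Finset (Fin m)) (hG : ((Finset.univ : Finset (Fin m)) \ G).card ≤ n) :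
    ∀ (k : ℕ) (A : Finset (Fin n)), A.card = k → A.Nonempty →
    ∀ (R H : Finset (Fin m)), R ⊆ G → H ⊆ G \ R → H.card + A.card ≤ n →
    (∀ i ∈ A, 0 < ell m n (v i) → v i ((G \ R) \ H) ≤ (H.card : ℝ) * ell m n (v i)) →
    ∃ B : Fin n → Finset (Fin m), (∀ i, i ∉ A → B i = ∅) ∧
      (∀ i ∈ A, ∀ j ∈ A, i ≠ j → Disjoint (B i) (B j)) ∧
      A.biUnion B = R ∧ ∀ i ∈ A, ell m n (v i) ≤ v i (B i) := by
  intro k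
  induction k using Nat.strong_induction_on with
  | _ k ih =>
  intro A hAcard hA R H hR hH hcard hinv
  -- cover lemma
  have cover : ∀ i (X Y Z : Finset (Fin m)), X ⊆ Y ∪ Z → v i X ≤ v i Y + v i Z :=
    fun i X Y Z h => le_trans (hmono i _ _ h) (hsub i Y Z)
  -- richness: every positive agent in A values R at least its threshold
  have hval : ∀ i ∈ A, 0 < ell m n (v i) → ell m n (v i) ≤ v i R := by
    intro i hiA hipos
    set τ := ell m n (v i) with hτ
    have hScard : ((Finset.univ \ G) ∪ H).card ≤ 2 * n := by
      have := Finset.card_union_le (Finset.univ \ G) H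
      have hA1 : 1 ≤ A.card := Finset.card_pos.mpr hA
      omega
    have h2n := ell_le_aux m n hn (v i) _ hScard
    have heq : Finset.univ \ ((Finset.univ \ G) ∪ H) = G \ H := by
      ext x; simp only [Finset.mem_sdiff, Finset.mem_union, Finset.mem_univ, true_and]
      tauto
    rw [heq] at h2n
    have hcov : v i (G \ H) ≤ v i R + v i ((G \ R) \ H) := by
      apply cover
      intro x hx
      simp only [Finset.mem_sdiff, Finset.mem_union] at hx ⊢
      by_cases hxR : x ∈ R <;> tauto
    have hHn : (H.card : ℝ) ≤ n := by
      have : H.card ≤ n := le_trans (Nat.le_add_right _ _) hcard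
      exact_mod_cast this
    have hn' : (1 : ℝ) ≤ n := by exact_mod_cast hn
    have hinv' := hinv i hiA hipos
    nlinarith [hnonneg i ((G \ R) \ H)]
  by_cases hpos_ex : ∃ i ∈ A, 0 < ell m n (v i)
  · obtain ⟨i₀, hi₀A, hi₀⟩ := hpos_ex
    -- candidate bundles
    set Cand := R.powerset.filter
      (fun P => ∃ i ∈ A, 0 < ell m n (v i) ∧ ell m n (v i) ≤ v i P) with hCand
    have hCandne : Cand.Nonempty := by
      refine ⟨R, ?_⟩
      simp only [hCand, Finset.mem_filter, Finset.mem_powerset]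
      exact ⟨Finset.Subset.refl R, i₀, hi₀A, hi₀, hval i₀ hi₀A hi₀⟩
    obtain ⟨P, hPCand, hPmin⟩ := Finset.exists_min_image Cand Finset.card hCandne
    simp only [hCand, Finset.mem_filter, Finset.mem_powerset] at hPCand
    obtain ⟨hPR, j, hjA, hjpos, hjval⟩ := hPCand
    have hPne : P.Nonempty := by
      rcases P.eq_empty_or_nonempty with h | h
      · rw [h, hnorm j] at hjval; linarith
      · exact h
    obtain ⟨h, hh⟩ := hPne
    have hsmall : ∀ i ∈ A, 0 < ell m n (v i) → v i (P \ {h}) < ell m n (v i) := by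
      intro i hiA hipos
      by_contra hcon
      push_neg at hcon
      have hmem : P \ {h} ∈ Cand := by
        simp only [hCand, Finset.mem_filter, Finset.mem_powerset]
        exact ⟨le_trans (Finset.sdiff_subset) hPR, i, hiA, hipos, hcon⟩
      have hlt : (P \ {h}).card < P.card := by
        have : P \ {h} = P.erase h := by
          ext x; simp [Finset.mem_sdiff, Finset.mem_erase, and_comm]
        rw [this]
        exact Finset.card_erase_lt_of_mem hh
      exact absurd (hPmin _ hmem) (by omega)
    by_cases hA1 : (A.erase j).Nonempty
    · -- recurse
      have hk1 : 1 ≤ A.card := Finset.card_pos.mpr ⟨j, hjA⟩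
      have hhR : h ∈ R := hPR hh
      have hhG : h ∈ G := hR hhR
      have hhH : h ∉ H := fun hc => (Finset.mem_sdiff.mp (hH hc)).2 hhR
      have hcard' : (insert h H).card + (A.erase j).card ≤ n := by
        rw [Finset.card_insert_of_notMem hhH, Finset.card_erase_of_mem hjA]
        omega
      have hH' : insert h H ⊆ G \ (R \ P) := by
        intro x hx
        rcases Finset.mem_insert.mp hx with rfl | hx
        · simp [hhG, hh]
        · have := Finset.mem_sdiff.mp (hH hx)
          simp only [Finset.mem_sdiff]
          exact ⟨this.1, fun hc => this.2 hc.1⟩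
      have hinv' : ∀ i ∈ A.erase j, 0 < ell m n (v i) →
          v i ((G \ (R \ P)) \ insert h H) ≤ ((insert h H).card : ℝ) * ell m n (v i) := by
        intro i hiA' hipos
        have hiA := Finset.mem_of_mem_erase hiA'
        have hsubcov : (G \ (R \ P)) \ insert h H ⊆ ((G \ R) \ H) ∪ (P \ {h}) := by
          intro x hx
          simp only [Finset.mem_sdiff, Finset.mem_insert, Finset.mem_union,
            Finset.mem_singleton] at hx ⊢
          push_neg at hx
          obtain ⟨⟨hxG, hxRP⟩, hxh, hxH⟩ := hx
          by_cases hxR : x ∈ R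
          · right
            exact ⟨hxRP hxR, hxh⟩
          · left; exact ⟨⟨hxG, hxR⟩, hxH⟩
        have h1 := cover i _ _ _ hsubcov
        have h2 := hinv i hiA hipos
        have h3 := le_of_lt (hsmall i hiA hipos)
        rw [Finset.card_insert_of_notMem hhH]
        push_cast
        linarith
      obtain ⟨B', hB'0, hB'disj, hB'union, hB'val⟩ :=
        ih (A.erase j).card (by
            have := Finset.card_erase_of_mem hjA; omega)
          (A.erase j) rfl hA1 (R \ P) (insert h H)
          (le_trans Finset.sdiff_subset hR) hH' hcard' hinv'
      refine ⟨Function.update B' j P, ?_, ?_, ?_, ?_⟩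
      · intro i hi
        have hij : i ≠ j := fun hc => hi (hc ▸ hjA)
        rw [Function.update_of_ne hij]
        exact hB'0 i (fun hc => hi (Finset.mem_of_mem_erase hc))
      · intro a ha b hb hab
        have hBsub : ∀ i ∈ A.erase j, B' i ⊆ R \ P := by
          intro i hi
          rw [← hB'union]
          exact Finset.subset_biUnion_of_mem B' hi
        rcases eq_or_ne a j with rfl | haj
        · rw [Function.update_self, Function.update_of_ne hab.symm]
          exact Finset.disjoint_left.mpr fun x hx hx' =>
            (Finset.mem_sdiff.mp (hBsub b (Finset.mem_erase.mpr ⟨hab.symm, hb⟩) hx')).2 hx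
        · rw [Function.update_of_ne haj]
          rcases eq_or_ne b j with rfl | hbj
          · rw [Function.update_self]
            exact Finset.disjoint_left.mpr fun x hx hx' =>
              (Finset.mem_sdiff.mp (hBsub a (Finset.mem_erase.mpr ⟨haj, ha⟩) hx)).2 hx'
          · rw [Function.update_of_ne hbj]
            exact hB'disj a (Finset.mem_erase.mpr ⟨haj, ha⟩)
              b (Finset.mem_erase.mpr ⟨hbj, hb⟩) hab
      · rw [← Finset.insert_erase hjA, Finset.biUnion_insert]
        have : (A.erase j).biUnion (Function.update B' j P) = (A.erase j).biUnion B' := by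
          apply Finset.biUnion_congr rfl
          intro i hi
          exact Function.update_of_ne (Finset.ne_of_mem_erase hi) _ _
        rw [this, hB'union, Function.update_self]
        exact Finset.union_sdiff_of_subset hPR
      · intro i hiA
        rcases eq_or_ne i j with rfl | hij
        · rw [Function.update_self]; exact hjval
        · rw [Function.update_of_ne hij]
          exact hB'val i (Finset.mem_erase.mpr ⟨hij, hiA⟩)
    · -- A = {j}
      have hAj : A = {j} := by
        rw [Finset.not_nonempty_iff_eq_empty] at hA1
        have := Finset.insert_erase hjA
        rw [hA1] at this
        simp at this
        exact this.symm
      refine ⟨fun i => if i = j then R else ∅, ?_, ?_, ?_, ?_⟩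
      · intro i hi
        rw [hAj, Finset.mem_singleton] at hi
        simp [hi]
      · intro a ha b hb hab
        rw [hAj, Finset.mem_singleton] at ha hb
        exact absurd (ha.trans hb.symm) hab
      · rw [hAj]; simp
      · intro i hiA
        rw [hAj, Finset.mem_singleton] at hiA
        simp only [hiA, if_pos rfl]
        exact hval j hjA hjpos
  · -- no positive agent: give everything to one agent
    push_neg at hpos_ex
    obtain ⟨j, hjA⟩ := hA
    refine ⟨fun i => if i = j then R else ∅, ?_, ?_, ?_, ?_⟩
    · intro i hi
      have : i ≠ j := fun hc => hi (hc ▸ hjA)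
      simp [this]
    · intro a ha b hb hab
      rcases eq_or_ne a j with rfl | haj
      · simp only [if_pos rfl, if_neg hab.symm]
        exact Finset.disjoint_empty_right R
      · simp only [if_neg haj]
        exact Finset.disjoint_empty_left _
    · apply Finset.Subset.antisymm
      · intro x hx
        obtain ⟨i, _, hxi⟩ := Finset.mem_biUnion.mp hx
        by_cases hij : i = j
        · rwa [if_pos hij] at hxi
        · rw [if_neg hij] at hxi; exact absurd hxi (Finset.notMem_empty x)
      · intro x hx
        exact Finset.mem_biUnion.mpr ⟨j, hjA, by simp [hx]⟩
    · intro i hiA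
      have h0 : ell m n (v i) ≤ 0 := hpos_ex i hiA
      exact le_trans h0 (hnonneg i _)

/-- If at most `n` goods are removed from `[m]`, the remaining goods `G` can be partitioned
into bundles `B_1, …, B_n` with `v_i(B_i) ≥ ℓ(v_i)` for every agent `i`. -/
theorem stmt_5 (m n : ℕ) (hn : 1 ≤ n)
    (v : Fin n → Finset (Fin m) → ℝ)
    (hnonneg : ∀ i (S : Finset (Fin m)), 0 ≤ v i S)
    (hnorm : ∀ i, v i ∅ = 0)
    (hmono : ∀ i (A B : Finset (Fin m)), A ⊆ B → v i A ≤ v i B)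
    (hsub : ∀ i (A B : Finset (Fin m)), v i (A ∪ B) ≤ v i A + v i B)
    (G : Finset (Fin m)) (hG : ((Finset.univ : Finset (Fin m)) \ G).card ≤ n) :
    ∃ B : Fin n → Finset (Fin m),
      (∀ i j, i ≠ j → Disjoint (B i) (B j)) ∧
      (Finset.univ.biUnion B = G) ∧
      (∀ i, v i (B i) ≥ ell m n (v i)) := by
  have huniv : (Finset.univ : Finset (Fin n)).Nonempty := by
    refine ⟨⟨0, hn⟩, Finset.mem_univ _⟩
  obtain ⟨B, _, hdisj, hunion, hval⟩ :=
    key m n hn v hnonneg hnorm hmono hsub G hG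
      (Finset.univ : Finset (Fin n)).card Finset.univ rfl huniv G ∅
      (Finset.Subset.refl G) (by simp) (by simp [Finset.card_univ]) (by
        intro i _ _
        simp [hnorm i])
  exact ⟨B, fun i j hij => hdisj i (Finset.mem_univ i) j (Finset.mem_univ j) hij,
    hunion, fun i => hval i (Finset.mem_univ i)⟩
end

section
/- Let v_1, …, v_n be valuations on [m] with n ≤ m, let p < 0 be a real number, and let (A_1, …, A_n) be an allocation of [m] with v_i(A_i) > 0 for every i. Then there exists an injective map π : {1,…,n} → [m] such that v_i({π(i)}) > 0 for all i and ((1/n)·∑_{i=1}^n v_i({π(i)})^p)^{1/p} ≥ (1/(m − n + 1)) · ((1/n)·∑_{i=1}^n v_i(A_i)^p)^{1/p}. -/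
/-- Matching lower bound for `p`-mean welfare, `p < 0`: given an allocation `(A_1, …, A_n)`
of `[m]` with `v_i(A_i) > 0` for every `i`, there is an injective map `π : [n] → [m]` with
`v_i({π(i)}) > 0` and `p`-mean welfare of the matching at least `1/(m−n+1)` times that of
the allocation. -/
theorem stmt_8 (m n : ℕ) (hn : 1 ≤ n) (hnm : n ≤ m) (p : ℝ) (hp : p < 0)
    (v : Fin n → Finset (Fin m) → ℝ)
    (hnonneg : ∀ i (S : Finset (Fin m)), 0 ≤ v i S)
    (hnorm : ∀ i, v i ∅ = 0)
    (hmono : ∀ i (A B : Finset (Fin m)), A ⊆ B → v i A ≤ v i B)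
    (hsub : ∀ i (A B : Finset (Fin m)), v i (A ∪ B) ≤ v i A + v i B)
    (A : Fin n → Finset (Fin m))
    (hdisj : ∀ i j, i ≠ j → Disjoint (A i) (A j))
    (hcover : Finset.univ.biUnion A = Finset.univ)
    (hpos : ∀ i, 0 < v i (A i)) :
    ∃ π : Fin n → Fin m, Function.Injective π ∧ (∀ i, 0 < v i {π i}) ∧
      ((1 / (n : ℝ)) * ∑ i, (v i {π i}) ^ p) ^ (1 / p) ≥
        (1 / ((m : ℝ) - n + 1)) * ((1 / (n : ℝ)) * ∑ i, (v i (A i)) ^ p) ^ (1 / p) := by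
  classical
  have : Nonempty (Fin n) := ⟨⟨0, hn⟩⟩
  set c : ℝ := (m : ℝ) - n + 1 with hc_def
  have hc : 0 < c := by
    have : (n : ℝ) ≤ m := by exact_mod_cast hnm
    simp only [hc_def]; linarith
  -- subadditivity over singletons
  have hsum : ∀ i (S : Finset (Fin m)), v i S ≤ ∑ g ∈ S, v i {g} := by
    intro i S
    induction S using Finset.induction_on with
    | empty => simp [hnorm]
    | @insert a s ha ih =>
      rw [Finset.sum_insert ha]
      calc v i (insert a s) = v i ({a} ∪ s) := by rw [Finset.insert_eq]
        _ ≤ v i {a} + v i s := hsub i {a} s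
        _ ≤ v i {a} + ∑ g ∈ s, v i {g} := by linarith
  have hAne : ∀ i, (A i).Nonempty := by
    intro i
    rcases (A i).eq_empty_or_nonempty with h | h
    · exfalso; have := hpos i; rw [h, hnorm] at this; exact lt_irrefl 0 this
    · exact h
  -- cardinality of each part
  have hcardsum : ∑ i, (A i).card = m := by
    have h := Finset.card_biUnion (fun i _ j _ hij => hdisj i j hij)
      (s := (Finset.univ : Finset (Fin n))) (t := A)
    rw [hcover] at h
    simpa using h.symm
  have hcard : ∀ i, ((A i).card : ℝ) ≤ c := by
    intro i
    have h1 : ∑ j ∈ Finset.univ.erase i, (A j).card + (A i).card = m := by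
      rw [Finset.sum_erase_add _ _ (Finset.mem_univ i)]; exact hcardsum
    have h2 : (n - 1 : ℕ) ≤ ∑ j ∈ Finset.univ.erase i, (A j).card := by
      calc (n - 1 : ℕ) = (Finset.univ.erase i).card := by
            simp [Finset.card_erase_of_mem]
        _ ≤ ∑ j ∈ Finset.univ.erase i, (A j).card :=
            Finset.card_nsmul_le_sum _ _ 1 (fun j _ => Finset.card_pos.mpr (hAne j)) |>.trans_eq'
              (by simp)
    have h3 : (A i).card + (n - 1) ≤ m := by omega
    have h4 : ((A i).card : ℝ) + ((n : ℝ) - 1) ≤ m := by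
      have := Nat.cast_le (α := ℝ) |>.mpr h3
      push_cast [Nat.cast_sub hn] at this
      linarith
    simp only [hc_def]; linarith
  -- choose a good item in each part
  have hchoice : ∀ i, ∃ g ∈ A i, v i (A i) ≤ c * v i {g} := by
    intro i
    obtain ⟨g, hg, hmax⟩ := Finset.exists_max_image (A i) (fun g => v i {g}) (hAne i)
    refine ⟨g, hg, ?_⟩
    calc v i (A i) ≤ ∑ g' ∈ A i, v i {g'} := hsum i (A i)
      _ ≤ ∑ _g' ∈ A i, v i {g} := Finset.sum_le_sum (fun j hj => hmax j hj)
      _ = ((A i).card : ℝ) * v i {g} := by rw [Finset.sum_const, nsmul_eq_mul]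
      _ ≤ c * v i {g} := by
          exact mul_le_mul_of_nonneg_right (hcard i) (hnonneg i _)
  choose g hg hvg using hchoice
  have hgpos : ∀ i, 0 < v i {g i} := by
    intro i
    by_contra h
    push_neg at h
    have h0 : v i {g i} = 0 := le_antisymm h (hnonneg i _)
    have := hvg i
    rw [h0, mul_zero] at this
    exact absurd this (not_le.mpr (hpos i))
  refine ⟨g, ?_, hgpos, ?_⟩
  · intro i j hij
    by_contra hne
    exact (Finset.disjoint_left.mp (hdisj i j hne)) (hg i) (hij ▸ hg j)
  · -- the inequality
    have hn' : 0 < (n : ℝ) := by exact_mod_cast hn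
    have key : ∀ i, (v i {g i}) ^ p ≤ (v i (A i)) ^ p * c ^ (-p) := by
      intro i
      have hdiv : v i (A i) / c ≤ v i {g i} := by
        rw [div_le_iff₀ hc]
        calc v i (A i) ≤ c * v i {g i} := hvg i
          _ = v i {g i} * c := mul_comm _ _
      have hdivpos : 0 < v i (A i) / c := div_pos (hpos i) hc
      have := Real.rpow_le_rpow_of_nonpos hdivpos hdiv hp.le
      calc (v i {g i}) ^ p ≤ (v i (A i) / c) ^ p := this
        _ = (v i (A i)) ^ p / c ^ p := Real.div_rpow (hnonneg i _) hc.le p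
        _ = (v i (A i)) ^ p * c ^ (-p) := by
            rw [Real.rpow_neg hc.le, div_eq_mul_inv]
    have hsumle : (1 / (n:ℝ)) * ∑ i, (v i {g i}) ^ p ≤
        c ^ (-p) * ((1 / (n:ℝ)) * ∑ i, (v i (A i)) ^ p) := by
      have h1 : ∑ i, (v i {g i}) ^ p ≤ ∑ i, (v i (A i)) ^ p * c ^ (-p) :=
        Finset.sum_le_sum (fun i _ => key i)
      rw [← Finset.sum_mul] at h1
      have h2 := mul_le_mul_of_nonneg_left h1 (by positivity : (0:ℝ) ≤ 1 / n)
      calc (1 / (n:ℝ)) * ∑ i, (v i {g i}) ^ p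
          ≤ (1 / (n:ℝ)) * ((∑ i, (v i (A i)) ^ p) * c ^ (-p)) := h2
        _ = c ^ (-p) * ((1 / (n:ℝ)) * ∑ i, (v i (A i)) ^ p) := by ring
    have hLpos : 0 < (1 / (n:ℝ)) * ∑ i, (v i {g i}) ^ p := by
      apply mul_pos (by positivity)
      apply Finset.sum_pos (fun i _ => Real.rpow_pos_of_pos (hgpos i) p)
      exact Finset.univ_nonempty
    have hTpos : 0 < (1 / (n:ℝ)) * ∑ i, (v i (A i)) ^ p := by
      apply mul_pos (by positivity)
      apply Finset.sum_pos (fun i _ => Real.rpow_pos_of_pos (hpos i) p)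
      exact Finset.univ_nonempty
    have hpinv : (1 / p) < 0 := one_div_neg.mpr hp
    have hstep := Real.rpow_le_rpow_of_nonpos hLpos hsumle hpinv.le
    have heq : (c ^ (-p) * ((1 / (n:ℝ)) * ∑ i, (v i (A i)) ^ p)) ^ (1/p)
        = (1 / c) * ((1 / (n:ℝ)) * ∑ i, (v i (A i)) ^ p) ^ (1/p) := by
      rw [Real.mul_rpow (Real.rpow_nonneg hc.le _) hTpos.le, ← Real.rpow_mul hc.le,
        show (-p) * (1/p) = -1 by rw [neg_mul, mul_one_div, div_self hp.ne],
        Real.rpow_neg_one, one_div]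
      rw [inv_eq_one_div]
    rw [heq] at hstep
    exact hstep
end

section
/- Fix a real number p ∈ (0,1) and an integer m ≥ 2. Let s_1, …, s_m be positive integers and z := ∑_{i=1}^m s_i. Consider m agents with additive valuations on the goods [m] = {1,…,m}: agents 1 and 2 both value good i at s_i (so v_1(S) = v_2(S) = ∑_{i∈S} s_i), and agents 3, …, m value every good at 0. Then there exists a subset T ⊆ [m] with ∑_{i∈T} s_i = z/2 if and only if there exists an allocation (A_1, …, A_m) of [m] such that v_1(A_1)^p + v_2(A_2)^p ≥ 2·(z/2)^p. -/
/-- NP-hardness gadget: with two agents valuing good `i` at `s_i` and `m − 2` zero agents,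
a perfect partition of `s` exists iff some allocation achieves
`v_1(A_1)^p + v_2(A_2)^p ≥ 2·(z/2)^p`, where `z = ∑ s_i` and `p ∈ (0,1)`. -/
theorem stmt_9 (p : ℝ) (hp0 : 0 < p) (hp1 : p < 1) (m : ℕ) (hm : 2 ≤ m)
    (s : Fin m → ℕ) (hs : ∀ i, 0 < s i) (z : ℕ) (hz : z = ∑ i, s i) :
    (∃ T : Finset (Fin m), (∑ i ∈ T, (s i : ℝ)) = (z : ℝ) / 2) ↔
    (∃ A : Fin m → Finset (Fin m),
      (∀ i j, i ≠ j → Disjoint (A i) (A j)) ∧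
      (Finset.univ.biUnion A = Finset.univ) ∧
      (∑ g ∈ A ⟨0, by omega⟩, (s g : ℝ)) ^ p + (∑ g ∈ A ⟨1, by omega⟩, (s g : ℝ)) ^ p ≥
        2 * ((z : ℝ) / 2) ^ p) := by
  have h01 : (⟨0, by omega⟩ : Fin m) ≠ ⟨1, by omega⟩ := by
    simp [Fin.ext_iff]
  have hzsum : (z : ℝ) = ∑ i, (s i : ℝ) := by
    rw [hz]; push_cast; ring
  constructor
  · rintro ⟨T, hT⟩
    refine ⟨fun i => if i = ⟨0, by omega⟩ then T else if i = ⟨1, by omega⟩ then Tᶜ else ∅,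
      ?_, ?_, ?_⟩
    · intro i j hij
      by_cases hi0 : i = ⟨0, by omega⟩ <;> by_cases hj0 : j = ⟨0, by omega⟩ <;>
        by_cases hi1 : i = ⟨1, by omega⟩ <;> by_cases hj1 : j = ⟨1, by omega⟩ <;>
        simp_all [disjoint_compl_right, disjoint_compl_left]
    · apply Finset.eq_univ_of_forall
      intro x
      simp only [Finset.mem_biUnion, Finset.mem_univ, true_and]
      by_cases hx : x ∈ T
      · exact ⟨⟨0, by omega⟩, by simp [hx]⟩
      · exact ⟨⟨1, by omega⟩, by simp [h01.symm, hx]⟩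
    · have hTc : (∑ i ∈ Tᶜ, (s i : ℝ)) = (z : ℝ) / 2 := by
        have := Finset.sum_add_sum_compl T (fun i => (s i : ℝ))
        rw [hT, ← hzsum] at this
        linarith
      show (∑ g ∈ T, (s g : ℝ)) ^ p + (∑ g ∈ Tᶜ, (s g : ℝ)) ^ p ≥ 2 * ((z : ℝ) / 2) ^ p
      rw [hT, hTc]
      exact le_of_eq (by ring)
  · rintro ⟨A, hdisj, -, hge⟩
    set a := ∑ g ∈ A ⟨0, by omega⟩, (s g : ℝ) with ha
    set b := ∑ g ∈ A ⟨1, by omega⟩, (s g : ℝ) with hb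
    have ha0 : 0 ≤ a := Finset.sum_nonneg fun i _ => by positivity
    have hb0 : 0 ≤ b := Finset.sum_nonneg fun i _ => by positivity
    have habz : a + b ≤ (z : ℝ) := by
      rw [ha, hb, ← Finset.sum_union (hdisj _ _ h01), hzsum]
      exact Finset.sum_le_sum_of_subset_of_nonneg (Finset.subset_univ _)
        (fun i _ _ => by positivity)
    have hz0 : 0 < (z : ℝ) := by
      rw [hzsum]
      have : (0:ℝ) < (s ⟨0, by omega⟩ : ℝ) := by exact_mod_cast hs _
      exact lt_of_lt_of_le this (Finset.single_le_sum (f := fun i => (s i : ℝ))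
        (fun i _ => by positivity) (Finset.mem_univ _))
    -- concavity: a^p + b^p ≤ 2 * ((a+b)/2)^p
    have hconc := (Real.concaveOn_rpow hp0.le hp1.le).2 (Set.mem_Ici.mpr ha0)
      (Set.mem_Ici.mpr hb0) (le_of_lt one_half_pos) (le_of_lt one_half_pos) (by norm_num)
    simp only [smul_eq_mul] at hconc
    have hmono : ((a + b)/2) ^ p ≤ ((z:ℝ)/2) ^ p :=
      Real.rpow_le_rpow (by linarith) (by linarith) hp0.le
    have key1 : (1/2 : ℝ) * a + (1/2 : ℝ) * b = (a + b)/2 := by ring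
    rw [key1] at hconc
    -- chain forces equalities
    have habz' : a + b = (z : ℝ) := by
      by_contra h
      have hlt : a + b < (z : ℝ) := lt_of_le_of_ne habz h
      have : ((a + b)/2) ^ p < ((z:ℝ)/2) ^ p :=
        Real.rpow_lt_rpow (by linarith) (by linarith) hp0
      linarith
    have hab : a = b := by
      by_contra h
      have := (Real.strictConcaveOn_rpow hp0 hp1).2 (Set.mem_Ici.mpr ha0)
        (Set.mem_Ici.mpr hb0) h one_half_pos one_half_pos (by norm_num)
      simp only [smul_eq_mul] at this
      rw [key1, habz'] at this
      linarith
    refine ⟨A ⟨0, by omega⟩, ?_⟩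
    rw [← ha]
    rw [hab] at habz'
    linarith
end

section
/- Let n ≥ 1 be an integer, δ > 0 a real number, and m = n². Define f on subsets T of [m] by f(T) := max( min(|T|, (1+δ)·n^{4δ}), (1+δ)·|T| / n^{1−2δ} ). Then for every partition (A_1, …, A_n) of [m] into n pairwise disjoint parts whose union is [m], the average (1/n)·∑_{i=1}^n f(A_i) is at most (1+δ)·(n^{4δ} + n^{2δ}). -/
/-- For the XOS-style function `f(T) = max(min(|T|, (1+δ)n^{4δ}), (1+δ)|T|/n^{1−2δ})` on
subsets of `[n²]`, every `n`-partition has average welfare at most `(1+δ)(n^{4δ} + n^{2δ})`. -/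
theorem stmt_10 (n : ℕ) (hn : 1 ≤ n) (δ : ℝ) (hδ : 0 < δ)
    (f : Finset (Fin (n ^ 2)) → ℝ)
    (hf : ∀ T : Finset (Fin (n ^ 2)),
      f T = max (min (T.card : ℝ) ((1 + δ) * (n : ℝ) ^ (4 * δ)))
              ((1 + δ) * (T.card : ℝ) / (n : ℝ) ^ (1 - 2 * δ)))
    (A : Fin n → Finset (Fin (n ^ 2)))
    (hdisj : ∀ i j, i ≠ j → Disjoint (A i) (A j))
    (hcover : Finset.univ.biUnion A = Finset.univ) :
    (1 / (n : ℝ)) * ∑ i, f (A i) ≤ (1 + δ) * ((n : ℝ) ^ (4 * δ) + (n : ℝ) ^ (2 * δ)) := by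
  have hn0 : (0:ℝ) < n := by exact_mod_cast hn
  have hP : (0:ℝ) < (n:ℝ) ^ (1 - 2*δ) := Real.rpow_pos_of_pos hn0 _
  have hsum : ∑ i, ((A i).card : ℝ) = (n:ℝ)^2 := by
    have : ∑ i, (A i).card = n^2 := by
      rw [← Finset.card_biUnion (fun i _ j _ h => hdisj i j h), hcover,
        Finset.card_univ, Fintype.card_fin]
    exact_mod_cast this
  have hbound : ∀ i, f (A i) ≤
      (1+δ)*(n:ℝ)^(4*δ) + (1+δ)*((A i).card : ℝ)/(n:ℝ)^(1-2*δ) := by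
    intro i
    rw [hf]
    apply max_le
    · exact le_add_of_le_of_nonneg (min_le_right _ _) (by positivity)
    · exact le_add_of_nonneg_of_le (by positivity) le_rfl
  have hsum2 : ∑ i, f (A i) ≤
      (n:ℝ) * ((1+δ)*(n:ℝ)^(4*δ)) + (1+δ)*(n:ℝ)^2/(n:ℝ)^(1-2*δ) := by
    calc ∑ i, f (A i)
        ≤ ∑ i, ((1+δ)*(n:ℝ)^(4*δ) + (1+δ)*((A i).card : ℝ)/(n:ℝ)^(1-2*δ)) :=
          Finset.sum_le_sum (fun i _ => hbound i)
      _ = (n:ℝ) * ((1+δ)*(n:ℝ)^(4*δ)) + (1+δ)*(n:ℝ)^2/(n:ℝ)^(1-2*δ) := by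
          rw [Finset.sum_add_distrib, Finset.sum_const, Finset.card_univ, Fintype.card_fin,
            nsmul_eq_mul]
          congr 1
          rw [← hsum, ← Finset.sum_div, ← Finset.mul_sum]
  have key : (n:ℝ)^2 / (n:ℝ)^(1-2*δ) = (n:ℝ) * (n:ℝ)^(2*δ) := by
    rw [← Real.rpow_natCast (n:ℝ) 2, ← Real.rpow_sub hn0]
    nth_rewrite 2 [← Real.rpow_one (n:ℝ)]
    rw [← Real.rpow_add hn0]
    norm_num
    ring_nf
  have hfin : (1/(n:ℝ)) * ((n:ℝ) * ((1+δ)*(n:ℝ)^(4*δ)) + (1+δ)*(n:ℝ)^2/(n:ℝ)^(1-2*δ))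
      = (1 + δ) * ((n : ℝ) ^ (4 * δ) + (n : ℝ) ^ (2 * δ)) := by
    rw [mul_div_assoc, key]
    field_simp
  calc (1 / (n : ℝ)) * ∑ i, f (A i)
      ≤ (1/(n:ℝ)) * ((n:ℝ) * ((1+δ)*(n:ℝ)^(4*δ)) + (1+δ)*(n:ℝ)^2/(n:ℝ)^(1-2*δ)) := by
        apply mul_le_mul_of_nonneg_left hsum2 (by positivity)
    _ = _ := hfin
end

section
/- Let n ≥ 1 be an integer, δ > 0 a real number, and m = n². The set function f on subsets of [m] defined by f(T) := max( min(|T|, (1+δ)·n^{4δ}), (1+δ)·|T| / n^{1−2δ} ) is nonnegative, normalized (f(∅) = 0), monotone (f(A) ≤ f(B) whenever A ⊆ B), and subadditive (f(A ∪ B) ≤ f(A) + f(B) for all A, B ⊆ [m]). -/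
/-!
`f(T)` depends only on `|T|`, through `s ↦ max (min s c) (a * s)` with `c, a ≥ 0`.
A function of the cardinality is monotone and subadditive as a set function as soon as it is
monotone and subadditive on `[0, ∞)`, because `|A| ≤ |B|` for `A ⊆ B` and `|A ∪ B| ≤ |A| + |B|`.
Both properties pass to a pointwise maximum, the linear arm is additive, and the cap `min s c`
is subadditive since `c ≥ 0`.
-/

open Finset

def capOrLinear (c a s : ℝ) : ℝ := max (min s c) (a * s)

section capOrLinear

variable {c a : ℝ}

lemma min_add_le_min_add_min {s t : ℝ} (hc : 0 ≤ c) (hs : 0 ≤ s) (ht : 0 ≤ t) :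
    min (s + t) c ≤ min s c + min t c := by
  rcases le_total c s with hcs | hsc
  · rw [min_eq_right hcs]
    exact (min_le_right _ _).trans (le_add_of_nonneg_right (le_min ht hc))
  rcases le_total c t with hct | htc
  · rw [min_eq_right hct]
    exact (min_le_right _ _).trans (le_add_of_nonneg_left (le_min hs hc))
  rw [min_eq_left hsc, min_eq_left htc]
  exact min_le_left _ _

lemma capOrLinear_nonneg {s : ℝ} (ha : 0 ≤ a) (hs : 0 ≤ s) : 0 ≤ capOrLinear c a s :=
  le_max_of_le_right (mul_nonneg ha hs)

lemma capOrLinear_zero (hc : 0 ≤ c) : capOrLinear c a 0 = 0 := by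
  simp [capOrLinear, hc]

lemma capOrLinear_mono (ha : 0 ≤ a) : Monotone (capOrLinear c a) := fun _ _ hst =>
  max_le_max (min_le_min_right c hst) (mul_le_mul_of_nonneg_left hst ha)

lemma capOrLinear_add_le {s t : ℝ} (hc : 0 ≤ c) (hs : 0 ≤ s) (ht : 0 ≤ t) :
    capOrLinear c a (s + t) ≤ capOrLinear c a s + capOrLinear c a t :=
  calc capOrLinear c a (s + t)
      ≤ max (min s c + min t c) (a * s + a * t) :=
        max_le_max (min_add_le_min_add_min hc hs ht) (mul_add a s t).le
    _ ≤ capOrLinear c a s + capOrLinear c a t := max_add_add_le_max_add_max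

end capOrLinear

section cardFunction

variable {α : Type*} {φ : ℝ → ℝ}

lemma monotone_comp_card (hφ : Monotone φ) {A B : Finset α} (hAB : A ⊆ B) :
    φ #A ≤ φ #B :=
  hφ (by exact_mod_cast card_le_card hAB)

lemma comp_card_union_le [DecidableEq α] (hφ : Monotone φ)
    (hsub : ∀ s t : ℝ, 0 ≤ s → 0 ≤ t → φ (s + t) ≤ φ s + φ t) (A B : Finset α) :
    φ #(A ∪ B) ≤ φ #A + φ #B :=
  calc φ #(A ∪ B) ≤ φ (#A + #B) := hφ (by exact_mod_cast card_union_le A B)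
    _ ≤ φ #A + φ #B := hsub _ _ (Nat.cast_nonneg _) (Nat.cast_nonneg _)

end cardFunction

theorem stmt_11_general (n : ℕ) (δ : ℝ) (hδ : 0 < δ)
    (f : Finset (Fin (n ^ 2)) → ℝ)
    (hf : ∀ T : Finset (Fin (n ^ 2)),
      f T = max (min (T.card : ℝ) ((1 + δ) * (n : ℝ) ^ (4 * δ)))
              ((1 + δ) * (T.card : ℝ) / (n : ℝ) ^ (1 - 2 * δ))) :
    (∀ S : Finset (Fin (n ^ 2)), 0 ≤ f S) ∧
    (f ∅ = 0) ∧
    (∀ A B : Finset (Fin (n ^ 2)), A ⊆ B → f A ≤ f B) ∧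
    (∀ A B : Finset (Fin (n ^ 2)), f (A ∪ B) ≤ f A + f B) := by
  set c := (1 + δ) * (n : ℝ) ^ (4 * δ)
  set a := (1 + δ) / (n : ℝ) ^ (1 - 2 * δ)
  have hc : 0 ≤ c := by positivity
  have ha : 0 ≤ a := by positivity
  have hf' : f = fun T => capOrLinear c a #T := by
    funext T
    rw [hf, capOrLinear, div_mul_eq_mul_div]
  subst hf'
  exact ⟨fun S => capOrLinear_nonneg ha (Nat.cast_nonneg _),
    by simpa using capOrLinear_zero hc,
    fun A B => monotone_comp_card (capOrLinear_mono ha),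
    comp_card_union_le (capOrLinear_mono ha) fun s t => capOrLinear_add_le hc⟩

/-- The function `f(T) = max(min(|T|, (1+δ)n^{4δ}), (1+δ)|T|/n^{1−2δ})` on subsets of `[n²]`
is nonnegative, normalized, monotone and subadditive. -/
theorem stmt_11 (n : ℕ) (hn : 1 ≤ n) (δ : ℝ) (hδ : 0 < δ)
    (f : Finset (Fin (n ^ 2)) → ℝ)
    (hf : ∀ T : Finset (Fin (n ^ 2)),
      f T = max (min (T.card : ℝ) ((1 + δ) * (n : ℝ) ^ (4 * δ)))
              ((1 + δ) * (T.card : ℝ) / (n : ℝ) ^ (1 - 2 * δ))) :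
    (∀ S : Finset (Fin (n ^ 2)), 0 ≤ f S) ∧
    (f ∅ = 0) ∧
    (∀ A B : Finset (Fin (n ^ 2)), A ⊆ B → f A ≤ f B) ∧
    (∀ A B : Finset (Fin (n ^ 2)), f (A ∪ B) ≤ f A + f B) :=
  stmt_11_general n δ hδ f hf
end
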